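/- An object (M,u,N) of Mor(C) is isomorphic to the zero object in the quotient category B(C) = Mor(C)/X if and only if u is a split monomorphism. -/

import Mathlib

open CategoryTheory CategoryTheory.Limits ZeroObject

/-- A morphism in the morphism category `Mor(C) = Arrow C` factors through an object of the
full subcategory `X` of split monomorphisms. -/
def FactorsThroughSplitMono {C : Type*} [Category C] {A B : Arrow C} (h : A ⟶ B) : Prop :=
  ∃ (P Q : C) (w : P ⟶ Q) (_ : IsSplitMono w) (a : A ⟶ Arrow.mk w) (b : Arrow.mk w ⟶ B),
    a ≫ b = h

/-- The congruence on `Mor(C)` defining the stable category `B(C) = Mor(C)/X`. -/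
def bRel (C : Type*) [Category C] [Preadditive C] : HomRel (Arrow C) :=
  fun {A B} f g =>
    ∃ h : A ⟶ B, FactorsThroughSplitMono h ∧
      f.left = g.left + h.left ∧ f.right = g.right + h.right

/-!
Call `f g : A ⟶ B` in `Mor(C)` left homotopic if `f.left - g.left = A.hom ≫ s` for some
`s : A.right ⟶ B.left`. This is a congruence, and it contains the relation defining `B(C)`:
if `h` factors as `A ⟶ (w : P ⟶ Q) ⟶ B` with `w` split mono, then
`h.left = a.left ≫ w ≫ r ≫ b.left = A.hom ≫ a.right ≫ r ≫ b.left`. Hence if `A` becomes zero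
in `B(C)`, then `𝟙 A` is left homotopic to `0`, i.e. `𝟙 = A.hom ≫ s`. Conversely, if `A.hom` is
split mono then `A` itself lies in `X`, so every morphism into or out of `A` factors through `X`
and `A` is zero in `B(C)`.
-/

section

variable {C : Type*} [Category C]

lemma FactorsThroughSplitMono.exists_left_eq_hom_comp {A B : Arrow C} {h : A ⟶ B}
    (hh : FactorsThroughSplitMono h) : ∃ s : A.right ⟶ B.left, h.left = A.hom ≫ s := by
  obtain ⟨P, Q, w, hw, a, b, rfl⟩ := hh
  refine ⟨a.right ≫ retraction w ≫ b.left, ?_⟩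
  rw [Arrow.comp_left, ← Arrow.w_mk_right_assoc a, IsSplitMono.id_assoc]

lemma FactorsThroughSplitMono.of_isSplitMono_source {A B : Arrow C} (hA : IsSplitMono A.hom)
    (h : A ⟶ B) : FactorsThroughSplitMono h :=
  ⟨_, _, A.hom, hA, 𝟙 A, h, Category.id_comp h⟩

lemma FactorsThroughSplitMono.of_isSplitMono_target {A B : Arrow C} (hB : IsSplitMono B.hom)
    (h : A ⟶ B) : FactorsThroughSplitMono h :=
  ⟨_, _, B.hom, hB, h, 𝟙 B, Category.comp_id h⟩

variable [Preadditive C]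

variable (C) in
def leftHomotopic : HomRel (Arrow C) :=
  fun {A B} f g => ∃ s : A.right ⟶ B.left, f.left - g.left = A.hom ≫ s

instance : Congruence (leftHomotopic C) where
  equivalence :=
    { refl _ := ⟨0, by simp⟩
      symm := fun ⟨s, hs⟩ => ⟨-s, by rw [Preadditive.comp_neg, ← hs, neg_sub]⟩
      trans := fun ⟨s, hs⟩ ⟨t, ht⟩ => ⟨s + t, by rw [Preadditive.comp_add, ← hs, ← ht]; abel⟩ }
  comp_left f := fun ⟨s, hs⟩ =>
    ⟨f.right ≫ s, by simp [← Preadditive.comp_sub, hs, Arrow.w_assoc]⟩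
  comp_right g := fun ⟨s, hs⟩ =>
    ⟨s ≫ g.left, by simp [← Preadditive.sub_comp, hs]⟩

lemma leftHomotopic_of_bRel {A B : Arrow C} {f g : A ⟶ B} (hfg : bRel C f g) :
    leftHomotopic C f g := by
  obtain ⟨h, hh, hleft, -⟩ := hfg
  obtain ⟨s, hs⟩ := hh.exists_left_eq_hom_comp
  exact ⟨s, by rw [hleft, add_sub_cancel_left, hs]⟩

lemma leftHomotopic_of_map_eq {A B : Arrow C} {f g : A ⟶ B}
    (hfg : (Quotient.functor (bRel C)).map f = (Quotient.functor (bRel C)).map g) :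
    leftHomotopic C f g :=
  (Quotient.functor_map_eq_iff _ f g).1 <| congrArg
    (CategoryTheory.Quotient.lift (bRel C) (Quotient.functor (leftHomotopic C))
      fun _ _ _ _ h => CategoryTheory.Quotient.sound _ (leftHomotopic_of_bRel h)).map hfg

lemma map_eq_of_factorsThroughSplitMono_sub {A B : Arrow C} {f g : A ⟶ B}
    (hfg : FactorsThroughSplitMono (f - g)) :
    (Quotient.functor (bRel C)).map f = (Quotient.functor (bRel C)).map g :=
  CategoryTheory.Quotient.sound _ ⟨f - g, hfg, by simp, by simp⟩

lemma isSplitMono_of_isZero_obj {A : Arrow C}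
    (hA : IsZero ((Quotient.functor (bRel C)).obj A)) : IsSplitMono A.hom := by
  obtain ⟨s, hs⟩ := leftHomotopic_of_map_eq
    (hA.eq_of_src ((Quotient.functor (bRel C)).map (𝟙 A)) ((Quotient.functor (bRel C)).map 0))
  exact IsSplitMono.mk' ⟨s, by simpa using hs.symm⟩

lemma isZero_obj_of_isSplitMono {A : Arrow C} (hA : IsSplitMono A.hom) :
    IsZero ((Quotient.functor (bRel C)).obj A) := by
  constructor
  · intro Y
    refine ⟨⟨⟨(Quotient.functor (bRel C)).map 0⟩, fun f => ?_⟩⟩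
    obtain ⟨f, rfl⟩ := (Quotient.functor (bRel C)).map_surjective f
    exact map_eq_of_factorsThroughSplitMono_sub (.of_isSplitMono_source hA _)
  · intro Y
    refine ⟨⟨⟨(Quotient.functor (bRel C)).map 0⟩, fun f => ?_⟩⟩
    obtain ⟨f, rfl⟩ := (Quotient.functor (bRel C)).map_surjective f
    exact map_eq_of_factorsThroughSplitMono_sub (.of_isSplitMono_target hA _)

lemma isZero_obj_iff_isSplitMono (A : Arrow C) :
    IsZero ((Quotient.functor (bRel C)).obj A) ↔ IsSplitMono A.hom :=
  ⟨isSplitMono_of_isZero_obj, isZero_obj_of_isSplitMono⟩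

end

theorem statement1 {C : Type*} [Category C] [Preadditive C] [HasZeroObject C]
    {M N : C} (u : M ⟶ N) :
    Nonempty ((Quotient.functor (bRel C)).obj (Arrow.mk u) ≅
        (Quotient.functor (bRel C)).obj (Arrow.mk (0 : (0 : C) ⟶ (0 : C)))) ↔
      IsSplitMono u := by
  have hzero : IsZero ((Quotient.functor (bRel C)).obj (Arrow.mk (0 : (0 : C) ⟶ (0 : C)))) :=
    (isZero_obj_iff_isSplitMono _).2 inferInstance
  refine Iff.trans ?_ (isZero_obj_iff_isSplitMono (Arrow.mk u))
  exact ⟨fun ⟨φ⟩ => hzero.of_iso φ, fun hu => ⟨hu.iso hzero⟩⟩
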